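/- Let T be a tree with vertices u and v, and let X and Y be trees disjoint from T and each other, with chosen non-pendant vertices s ∈ V(X) and r ∈ V(Y), such that X and Y have equal numbers of pendant vertices (p_x = p_y). Let T₁ be obtained from T by identifying u with s and v with r, and T₂ by identifying u with r and v with s. Then TW(T₁) = TW(T₂). -/

import Mathlib

open Finset SimpleGraph

noncomputable section
open scoped Classical

/-- The set of pendant (degree-1) vertices of a finite graph. -/
def pendants {V : Type*} (G : SimpleGraph V) [Fintype V] : Finset V :=
  Finset.univ.filter fun v => G.degree v = 1

/-- `dplus G u` is the sum of the distances from `u` to the pendant vertices of `G`. -/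
def dplus {V : Type*} (G : SimpleGraph V) [Fintype V] (u : V) : ℕ :=
  ∑ v ∈ pendants G, G.dist u v

/-- Terminal Wiener index: sum of distances over unordered pairs of pendant vertices
(each unordered pair is counted twice in the double sum, hence the division by 2). -/
def TW {V : Type*} (G : SimpleGraph V) [Fintype V] : ℕ :=
  (∑ u ∈ pendants G, ∑ v ∈ pendants G, G.dist u v) / 2

/-- The graph obtained from `A` and `B` by identifying `u ∈ A` with `v ∈ B`
(the merged vertex is represented by `Sum.inl u`). -/
def glue {α β : Type*} (A : SimpleGraph α) (B : SimpleGraph β) (u : α) (v : β) :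
    SimpleGraph (α ⊕ {b : β // b ≠ v}) :=
  SimpleGraph.fromRel fun x y =>
    match x, y with
    | Sum.inl a, Sum.inl a' => A.Adj a a'
    | Sum.inr b, Sum.inr b' => B.Adj b.1 b'.1
    | Sum.inl a, Sum.inr b => a = u ∧ B.Adj v b.1
    | Sum.inr _, Sum.inl _ => False

section GlueLemmas

variable {α β : Type*} (A : SimpleGraph α) (B : SimpleGraph β) (u : α) (v : β)


lemma glue_adj_inl_inl {a a' : α} :
    (glue A B u v).Adj (Sum.inl a) (Sum.inl a') ↔ A.Adj a a' := by
  simp only [glue, fromRel_adj]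
  constructor
  · rintro ⟨-, h | h⟩
    · exact h
    · exact h.symm
  · exact fun h => ⟨by simp [h.ne], Or.inl h⟩

lemma glue_adj_inl_inr {a : α} {b : {b : β // b ≠ v}} :
    (glue A B u v).Adj (Sum.inl a) (Sum.inr b) ↔ a = u ∧ B.Adj v b.1 := by
  simp only [glue, fromRel_adj]
  constructor
  · rintro ⟨-, h | h⟩
    · exact h
    · exact h.elim
  · exact fun h => ⟨by simp, Or.inl h⟩

lemma glue_adj_inr_inl {a : α} {b : {b : β // b ≠ v}} :
    (glue A B u v).Adj (Sum.inr b) (Sum.inl a) ↔ a = u ∧ B.Adj v b.1 := by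
  rw [adj_comm]; exact glue_adj_inl_inr A B u v

lemma glue_adj_inr_inr {b b' : {b : β // b ≠ v}} :
    (glue A B u v).Adj (Sum.inr b) (Sum.inr b') ↔ B.Adj b.1 b'.1 := by
  simp only [glue, fromRel_adj]
  constructor
  · rintro ⟨-, h | h⟩
    · exact h
    · exact h.symm
  · exact fun h => ⟨by simp [Subtype.ext_iff, h.ne], Or.inl h⟩

/-- The canonical inclusion of `β` into the glued vertex type. -/
def iB (u : α) (v : β) (b : β) : α ⊕ {b : β // b ≠ v} :=
  if h : b = v then Sum.inl u else Sum.inr ⟨b, h⟩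

lemma iB_v : iB u v v = Sum.inl u := dif_pos rfl

/-- Projection to the `A`-side. -/
def pA (u : α) (v : β) : α ⊕ {b : β // b ≠ v} → α := Sum.elim id (fun _ => u)
/-- Projection to the `B`-side. -/
def pB (u : α) (v : β) : α ⊕ {b : β // b ≠ v} → β := Sum.elim (fun _ => v) Subtype.val


lemma iB_ne {b : β} (h : b ≠ v) : iB u v b = Sum.inr ⟨b, h⟩ := dif_neg h

lemma iB_coe (b : {b : β // b ≠ v}) : iB u v b.1 = Sum.inr b := by
  rw [iB_ne u v b.2]

lemma pB_iB (u : α) (v : β) (c : β) : pB u v (iB u v c) = c := by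
  by_cases hc : c = v
  · rw [hc, iB_v]; rfl
  · rw [iB_ne u v hc]; rfl

lemma iB_injective : Function.Injective (iB u v) := by
  intro b b' h
  unfold iB at h
  split_ifs at h with h1 h2 h2 <;> simp_all

def homA : A →g glue A B u v :=
  ⟨Sum.inl, fun h => (glue_adj_inl_inl A B u v).2 h⟩

def homB : B →g glue A B u v := by
  refine ⟨iB u v, ?_⟩
  intro b b' h
  by_cases hb : b = v <;> by_cases hb' : b' = v
  · exact absurd (hb.trans hb'.symm) h.ne
  · rw [hb, iB_v u v, iB_ne u v hb']
    exact (glue_adj_inl_inr A B u v).2 ⟨rfl, hb ▸ h⟩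
  · rw [hb', iB_v u v, iB_ne u v hb]
    exact (glue_adj_inr_inl A B u v).2 ⟨rfl, hb' ▸ h.symm⟩
  · rw [iB_ne u v hb, iB_ne u v hb']
    exact (glue_adj_inr_inr A B u v).2 h

lemma glue_reachable (hA : A.Connected) (hB : B.Connected) (x : α ⊕ {b : β // b ≠ v}) :
    (glue A B u v).Reachable (Sum.inl u) x := by
  cases x with
  | inl a => exact (hA u a).map (homA A B u v)
  | inr b =>
    have h := (hB v b.1).map (homB A B u v)
    have e1 : (homB A B u v) v = Sum.inl u := iB_v u v
    have e2 : (homB A B u v) b.1 = Sum.inr b := iB_coe u v b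
    rwa [e1, e2] at h

lemma glue_connected (hA : A.Connected) (hB : B.Connected) : (glue A B u v).Connected := by
  rw [connected_iff]
  exact ⟨fun x y => (glue_reachable A B u v hA hB x).symm.trans (glue_reachable A B u v hA hB y),
    ⟨Sum.inl u⟩⟩

lemma dist_le_of_adj_map {V W : Type*} {G : SimpleGraph V} {H : SimpleGraph W}
    (hH : H.Connected) (f : V → W)
    (hf : ∀ ⦃x y⦄, G.Adj x y → H.dist (f x) (f y) ≤ 1) :
    ∀ {x y : V} (w : G.Walk x y), H.dist (f x) (f y) ≤ w.length := by
  intro x y w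
  induction w with
  | nil => simp
  | cons h p ih =>
    rename_i x m y
    calc H.dist (f x) (f y) ≤ H.dist (f x) (f m) + H.dist (f m) (f y) := hH.dist_triangle
    _ ≤ 1 + p.length := Nat.add_le_add (hf h) ih
    _ = (SimpleGraph.Walk.cons h p).length := by rw [SimpleGraph.Walk.length_cons]; omega

lemma dist_hom_le {V W : Type*} {G : SimpleGraph V} {H : SimpleGraph W} (f : G →g H)
    {x y : V} (h : G.Reachable x y) : H.dist (f x) (f y) ≤ G.dist x y := by
  obtain ⟨w, hw⟩ := h.exists_walk_length_eq_dist
  calc H.dist (f x) (f y) ≤ (w.map f).length := dist_le _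
  _ = w.length := by rw [SimpleGraph.Walk.length_map]
  _ = G.dist x y := hw


lemma pA_le : ∀ ⦃x y⦄, (glue A B u v).Adj x y →
    A.dist (pA u v x) (pA u v y) ≤ 1 := by
  rintro (a | b) (a' | b') h
  · have h2 := (glue_adj_inl_inl A B u v).1 h
    have := dist_le (SimpleGraph.Walk.cons h2 SimpleGraph.Walk.nil)
    simpa [pA] using this
  · obtain ⟨rfl, -⟩ := (glue_adj_inl_inr A B u v).1 h
    simp [pA, SimpleGraph.dist_self]
  · obtain ⟨rfl, -⟩ := (glue_adj_inr_inl A B u v).1 h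
    simp [pA, SimpleGraph.dist_self]
  · simp [pA, SimpleGraph.dist_self]

lemma pB_le : ∀ ⦃x y⦄, (glue A B u v).Adj x y →
    B.dist (pB u v x) (pB u v y) ≤ 1 := by
  rintro (a | b) (a' | b') h
  · simp [pB, SimpleGraph.dist_self]
  · obtain ⟨-, hadj⟩ := (glue_adj_inl_inr A B u v).1 h
    have := dist_le (SimpleGraph.Walk.cons hadj SimpleGraph.Walk.nil)
    simpa [pB] using this
  · obtain ⟨-, hadj⟩ := (glue_adj_inr_inl A B u v).1 h
    have := dist_le (SimpleGraph.Walk.cons hadj.symm SimpleGraph.Walk.nil)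
    simpa [pB] using this
  · have h2 := (glue_adj_inr_inr A B u v).1 h
    have := dist_le (SimpleGraph.Walk.cons h2 SimpleGraph.Walk.nil)
    simpa [pB] using this

lemma glue_dist_inl_inl (hA : A.Connected) (hB : B.Connected) (a a' : α) :
    (glue A B u v).dist (Sum.inl a) (Sum.inl a') = A.dist a a' := by
  have hG := glue_connected A B u v hA hB
  refine le_antisymm (dist_hom_le (homA A B u v) (hA a a')) ?_
  obtain ⟨w, hw⟩ := (hG.preconnected (Sum.inl a) (Sum.inl a')).exists_walk_length_eq_dist
  have := dist_le_of_adj_map hA (pA u v) (pA_le A B u v) w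
  simpa [pA, hw] using this

lemma glue_dist_iB (hA : A.Connected) (hB : B.Connected) (b b' : β) :
    (glue A B u v).dist (iB u v b) (iB u v b') = B.dist b b' := by
  have hG := glue_connected A B u v hA hB
  refine le_antisymm (dist_hom_le (homB A B u v) (hB b b')) ?_
  obtain ⟨w, hw⟩ := (hG.preconnected (iB u v b) (iB u v b')).exists_walk_length_eq_dist
  have h2 := dist_le_of_adj_map hB (pB u v) (pB_le A B u v) w
  rwa [pB_iB, pB_iB, hw] at h2

lemma glue_walk_mem {x y : α ⊕ {b : β // b ≠ v}} (w : (glue A B u v).Walk x y)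
    (hx : x.isLeft) (hy : y.isRight) : Sum.inl u ∈ w.support := by
  induction w with
  | nil =>
    rw [Sum.isLeft_iff] at hx
    obtain ⟨a, rfl⟩ := hx
    simp at hy
  | cons h p ih =>
    rename_i x m y
    cases x with
    | inr b => simp at hx
    | inl a =>
      cases m with
      | inl a'' =>
        rw [SimpleGraph.Walk.support_cons]
        exact List.mem_cons_of_mem _ (ih (by simp) hy)
      | inr b'' =>
        obtain ⟨rfl, -⟩ := (glue_adj_inl_inr A B u v).1 h
        rw [SimpleGraph.Walk.support_cons]
        exact List.mem_cons_self

lemma glue_dist_inl_inr (hA : A.Connected) (hB : B.Connected) (a : α) (b : {b : β // b ≠ v}) :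
    (glue A B u v).dist (Sum.inl a) (Sum.inr b) = A.dist a u + B.dist v b.1 := by
  have hG := glue_connected A B u v hA hB
  refine le_antisymm ?_ ?_
  · calc (glue A B u v).dist (Sum.inl a) (Sum.inr b)
        ≤ (glue A B u v).dist (Sum.inl a) (Sum.inl u)
          + (glue A B u v).dist (Sum.inl u) (Sum.inr b) := hG.dist_triangle
    _ = A.dist a u + B.dist v b.1 := by
        rw [glue_dist_inl_inl A B u v hA hB]
        congr 1
        have := glue_dist_iB A B u v hA hB v b.1
        rwa [iB_v, iB_coe] at this
  · obtain ⟨w, hw⟩ := (hG.preconnected (Sum.inl a) (Sum.inr b)).exists_walk_length_eq_dist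
    have hmem : Sum.inl u ∈ w.support :=
      glue_walk_mem A B u v w (by simp) (by simp)
    have l1 : A.dist a u ≤ (w.takeUntil _ hmem).length := by
      have := dist_le_of_adj_map hA (pA u v) (pA_le A B u v) (w.takeUntil _ hmem)
      simpa [pA] using this
    have l2 : B.dist v b.1 ≤ (w.dropUntil _ hmem).length := by
      have := dist_le_of_adj_map hB (pB u v) (pB_le A B u v) (w.dropUntil _ hmem)
      simpa [pB] using this
    have hlen : (w.takeUntil _ hmem).length + (w.dropUntil _ hmem).length = w.length := by
      rw [← SimpleGraph.Walk.length_append, SimpleGraph.Walk.take_spec]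
    omega

lemma glue_dist_inl_iB (hA : A.Connected) (hB : B.Connected) (a : α) (b : β) :
    (glue A B u v).dist (Sum.inl a) (iB u v b) = A.dist a u + B.dist v b := by
  by_cases hb : b = v
  · rw [hb, iB_v, glue_dist_inl_inl A B u v hA hB]
    simp [SimpleGraph.dist_self]
  · rw [iB_ne u v hb, glue_dist_inl_inr A B u v hA hB]

section Deg
variable [Fintype α] [Fintype β]

lemma glue_neighborFinset_inl {a : α} (ha : a ≠ u) :
    (glue A B u v).neighborFinset (Sum.inl a)
      = (A.neighborFinset a).map ⟨Sum.inl, Sum.inl_injective⟩ := by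
  ext x
  cases x with
  | inl a' =>
    simp [mem_neighborFinset, glue_adj_inl_inl]
  | inr b =>
    simp only [mem_neighborFinset, glue_adj_inl_inr, Finset.mem_map,
      Function.Embedding.coeFn_mk]
    constructor
    · rintro ⟨rfl, -⟩; exact absurd rfl ha
    · rintro ⟨a', -, h⟩; exact absurd h (by simp)

lemma glue_degree_inl {a : α} (ha : a ≠ u) :
    (glue A B u v).degree (Sum.inl a) = A.degree a := by
  rw [degree, glue_neighborFinset_inl A B u v ha, Finset.card_map, degree]

lemma glue_neighborFinset_inr (b : {b : β // b ≠ v}) :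
    (glue A B u v).neighborFinset (Sum.inr b)
      = (B.neighborFinset b.1).map ⟨iB u v, iB_injective u v⟩ := by
  ext x
  simp only [mem_neighborFinset, Finset.mem_map, Function.Embedding.coeFn_mk]
  cases x with
  | inl a =>
    rw [glue_adj_inr_inl]
    constructor
    · rintro ⟨ha, h⟩
      exact ⟨v, h.symm, by rw [iB_v, ha]⟩
    · rintro ⟨c, hc, h⟩
      by_cases hcv : c = v
      · rw [hcv, iB_v] at h
        cases h
        exact ⟨rfl, hcv ▸ hc.symm⟩
      · rw [iB_ne u v hcv] at h
        cases h
  | inr b' =>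
    rw [glue_adj_inr_inr]
    constructor
    · intro h
      exact ⟨b'.1, h, iB_coe u v b'⟩
    · rintro ⟨c, hc, h⟩
      by_cases hcv : c = v
      · rw [hcv, iB_v] at h; cases h
      · rw [iB_ne u v hcv] at h
        obtain rfl : (⟨c, hcv⟩ : {b : β // b ≠ v}) = b' := by injection h
        exact hc

lemma glue_degree_inr (b : {b : β // b ≠ v}) :
    (glue A B u v).degree (Sum.inr b) = B.degree b.1 := by
  rw [degree, glue_neighborFinset_inr A B u v, Finset.card_map, degree]

lemma connected_exists_adj {V : Type*} [Fintype V] {G : SimpleGraph V}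
    (hG : G.Connected) (h2 : 2 ≤ Fintype.card V) (x : V) : ∃ y, G.Adj x y := by
  obtain ⟨w, hw⟩ := Fintype.exists_ne_of_one_lt_card h2 x
  obtain ⟨p⟩ := hG x w
  cases p with
  | nil => exact absurd rfl hw
  | cons h p => exact ⟨_, h⟩

lemma glue_two_le_degree (hA : A.Connected) (hB : B.Connected)
    (h2a : 2 ≤ Fintype.card α) (h2b : 2 ≤ Fintype.card β) :
    2 ≤ (glue A B u v).degree (Sum.inl u) := by
  obtain ⟨a0, ha0⟩ := connected_exists_adj hA h2a u
  obtain ⟨b0, hb0⟩ := connected_exists_adj hB h2b v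
  have h1 : Sum.inl a0 ∈ (glue A B u v).neighborFinset (Sum.inl u) := by
    rw [mem_neighborFinset, glue_adj_inl_inl]; exact ha0
  have h2 : (Sum.inr ⟨b0, hb0.ne'⟩ : α ⊕ {b : β // b ≠ v})
      ∈ (glue A B u v).neighborFinset (Sum.inl u) := by
    rw [mem_neighborFinset, glue_adj_inl_inr]; exact ⟨rfl, hb0⟩
  exact Finset.one_lt_card.2 ⟨_, h1, _, h2, by simp⟩

lemma glue_pendants (hA : A.Connected) (hB : B.Connected)
    (h2a : 2 ≤ Fintype.card α) (h2b : 2 ≤ Fintype.card β)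
    (hu : A.degree u ≠ 1) (hv : B.degree v ≠ 1) :
    pendants (glue A B u v)
      = (pendants A).map ⟨Sum.inl, Sum.inl_injective⟩
        ∪ (pendants B).map ⟨iB u v, iB_injective u v⟩ := by
  ext x
  simp only [pendants, Finset.mem_filter, Finset.mem_univ, true_and, Finset.mem_union,
    Finset.mem_map, Function.Embedding.coeFn_mk]
  cases x with
  | inl a =>
    by_cases ha : a = u
    · have hdeg := glue_two_le_degree A B u v hA hB h2a h2b
      rw [ha]
      constructor
      · intro h; omega
      · rintro (⟨a', h1, h2⟩ | ⟨b', h1, h2⟩)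
        · cases h2; exact absurd h1 hu
        · by_cases hbv : b' = v
          · subst hbv; exact absurd h1 hv
          · rw [iB_ne u v hbv] at h2; cases h2
    · rw [glue_degree_inl A B u v ha]
      constructor
      · intro h; exact Or.inl ⟨a, h, rfl⟩
      · rintro (⟨a', h1, h2⟩ | ⟨b', h1, h2⟩)
        · cases h2; exact h1
        · by_cases hbv : b' = v
          · rw [hbv, iB_v] at h2; cases h2; exact absurd rfl ha
          · rw [iB_ne u v hbv] at h2; cases h2
  | inr b =>
    rw [glue_degree_inr A B u v]
    constructor
    · intro h; exact Or.inr ⟨b.1, h, iB_coe u v b⟩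
    · rintro (⟨a', h1, h2⟩ | ⟨b', h1, h2⟩)
      · cases h2
      · by_cases hbv : b' = v
        · rw [hbv, iB_v] at h2; cases h2
        · rw [iB_ne u v hbv] at h2
          obtain rfl : (⟨b', hbv⟩ : {b : β // b ≠ v}) = b := by injection h2
          exact h1

lemma glue_sum_pendants (hA : A.Connected) (hB : B.Connected)
    (h2a : 2 ≤ Fintype.card α) (h2b : 2 ≤ Fintype.card β)
    (hu : A.degree u ≠ 1) (hv : B.degree v ≠ 1)
    (f : α ⊕ {b : β // b ≠ v} → ℕ) :
    ∑ x ∈ pendants (glue A B u v), f x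
      = ∑ a ∈ pendants A, f (Sum.inl a) + ∑ b ∈ pendants B, f (iB u v b) := by
  rw [glue_pendants A B u v hA hB h2a h2b hu hv, Finset.sum_union, Finset.sum_map,
    Finset.sum_map]
  · rfl
  · rw [Finset.disjoint_left]
    rintro x hx1 hx2
    simp only [Finset.mem_map, Function.Embedding.coeFn_mk] at hx1 hx2
    obtain ⟨a, -, rfl⟩ := hx1
    obtain ⟨b, hb, h⟩ := hx2
    by_cases hbv : b = v
    · subst hbv
      simp only [pendants, Finset.mem_filter] at hb
      exact hv hb.2
    · rw [iB_ne u v hbv] at h; cases h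

lemma glue_dist_iB_inl (hA : A.Connected) (hB : B.Connected) (b : β) (a : α) :
    (glue A B u v).dist (iB u v b) (Sum.inl a) = A.dist a u + B.dist v b := by
  rw [SimpleGraph.dist_comm, glue_dist_inl_iB A B u v hA hB]

lemma glue_Sd (hA : A.Connected) (hB : B.Connected)
    (h2a : 2 ≤ Fintype.card α) (h2b : 2 ≤ Fintype.card β)
    (hu : A.degree u ≠ 1) (hv : B.degree v ≠ 1) :
    ∑ x ∈ pendants (glue A B u v), ∑ y ∈ pendants (glue A B u v), (glue A B u v).dist x y
      = (∑ a ∈ pendants A, ∑ a' ∈ pendants A, A.dist a a')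
        + (∑ b ∈ pendants B, ∑ b' ∈ pendants B, B.dist b b')
        + 2 * ∑ a ∈ pendants A, ∑ b ∈ pendants B, (A.dist a u + B.dist v b) := by
  rw [glue_sum_pendants A B u v hA hB h2a h2b hu hv]
  have e1 : ∀ a : α, ∑ y ∈ pendants (glue A B u v), (glue A B u v).dist (Sum.inl a) y
      = ∑ a' ∈ pendants A, A.dist a a' + ∑ b ∈ pendants B, (A.dist a u + B.dist v b) := by
    intro a
    rw [glue_sum_pendants A B u v hA hB h2a h2b hu hv]
    congr 1
    · exact Finset.sum_congr rfl fun a' _ => glue_dist_inl_inl A B u v hA hB a a'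
    · exact Finset.sum_congr rfl fun b _ => glue_dist_inl_iB A B u v hA hB a b
  have e2 : ∀ b : β, ∑ y ∈ pendants (glue A B u v), (glue A B u v).dist (iB u v b) y
      = ∑ a ∈ pendants A, (A.dist a u + B.dist v b) + ∑ b' ∈ pendants B, B.dist b b' := by
    intro b
    rw [glue_sum_pendants A B u v hA hB h2a h2b hu hv]
    congr 1
    · exact Finset.sum_congr rfl fun a _ => glue_dist_iB_inl A B u v hA hB b a
    · exact Finset.sum_congr rfl fun b' _ => glue_dist_iB A B u v hA hB b b'
  rw [Finset.sum_congr rfl fun a _ => e1 a, Finset.sum_congr rfl fun b _ => e2 b,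
    Finset.sum_add_distrib, Finset.sum_add_distrib]
  have e3 : ∑ b ∈ pendants B, ∑ a ∈ pendants A, (A.dist a u + B.dist v b)
      = ∑ a ∈ pendants A, ∑ b ∈ pendants B, (A.dist a u + B.dist v b) :=
    Finset.sum_comm
  rw [e3]
  ring

end Deg

end GlueLemmas

lemma double_sum_add {ι κ : Type*} (sI : Finset ι) (t : Finset κ) (f : ι → ℕ) (g : κ → ℕ) :
    ∑ i ∈ sI, ∑ j ∈ t, (f i + g j) = t.card * ∑ i ∈ sI, f i + sI.card * ∑ j ∈ t, g j := by
  have h : ∀ i, ∑ j ∈ t, (f i + g j) = t.card * f i + ∑ j ∈ t, g j := by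
    intro i
    rw [Finset.sum_add_distrib, Finset.sum_const, smul_eq_mul]
  rw [Finset.sum_congr rfl fun i _ => h i, Finset.sum_add_distrib, ← Finset.mul_sum,
    Finset.sum_const, smul_eq_mul]

lemma double_sum_add3 {ι κ : Type*} (sI : Finset ι) (t : Finset κ) (c : ℕ)
    (f : ι → ℕ) (g : κ → ℕ) :
    ∑ i ∈ sI, ∑ j ∈ t, (c + f i + g j)
      = sI.card * t.card * c + t.card * ∑ i ∈ sI, f i + sI.card * ∑ j ∈ t, g j := by
  rw [double_sum_add sI t (fun i => c + f i) g, Finset.sum_add_distrib, Finset.sum_const,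
    smul_eq_mul]
  ring

lemma Sd_double_glue {α β γ : Type*} [Fintype α] [Fintype β] [Fintype γ]
    (T : SimpleGraph α) (X : SimpleGraph β) (Y : SimpleGraph γ)
    (u v : α) (s : β) (r : γ)
    (hT : T.Connected) (hX : X.Connected) (hY : Y.Connected)
    (h2a : 2 ≤ Fintype.card α) (h2b : 2 ≤ Fintype.card β) (h2c : 2 ≤ Fintype.card γ)
    (huv : u ≠ v)
    (hu : T.degree u ≠ 1) (hv : T.degree v ≠ 1)
    (hs : X.degree s ≠ 1) (hr : Y.degree r ≠ 1) :
    ∑ x ∈ pendants (glue (glue T X u s) Y (Sum.inl v) r),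
      ∑ y ∈ pendants (glue (glue T X u s) Y (Sum.inl v) r),
        (glue (glue T X u s) Y (Sum.inl v) r).dist x y
    = (∑ a ∈ pendants T, ∑ a' ∈ pendants T, T.dist a a')
      + (∑ x ∈ pendants X, ∑ x' ∈ pendants X, X.dist x x')
      + (∑ y ∈ pendants Y, ∑ y' ∈ pendants Y, Y.dist y y')
      + 2 * ∑ a ∈ pendants T, ∑ x ∈ pendants X, (T.dist a u + X.dist s x)
      + 2 * (∑ a ∈ pendants T, ∑ y ∈ pendants Y, (T.dist a v + Y.dist r y)
             + ∑ x ∈ pendants X, ∑ y ∈ pendants Y, (T.dist v u + X.dist s x + Y.dist r y)) := by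
  have hGTX := glue_connected T X u s hT hX
  have hcard : 2 ≤ Fintype.card (α ⊕ {b : β // b ≠ s}) := by
    rw [Fintype.card_sum]; omega
  have hdegv : (glue T X u s).degree (Sum.inl v) ≠ 1 := by
    rw [glue_degree_inl T X u s huv.symm]; exact hv
  rw [glue_Sd (glue T X u s) Y (Sum.inl v) r hGTX hY hcard h2c hdegv hr,
    glue_Sd T X u s hT hX h2a h2b hu hs]
  have ecross : ∑ p ∈ pendants (glue T X u s), ∑ y ∈ pendants Y,
        ((glue T X u s).dist p (Sum.inl v) + Y.dist r y)
      = ∑ a ∈ pendants T, ∑ y ∈ pendants Y, (T.dist a v + Y.dist r y)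
        + ∑ x ∈ pendants X, ∑ y ∈ pendants Y, (T.dist v u + X.dist s x + Y.dist r y) := by
    rw [glue_sum_pendants T X u s hT hX h2a h2b hu hs]
    congr 1
    · refine Finset.sum_congr rfl fun a _ => Finset.sum_congr rfl fun y _ => ?_
      rw [glue_dist_inl_inl T X u s hT hX]
    · refine Finset.sum_congr rfl fun x _ => Finset.sum_congr rfl fun y _ => ?_
      rw [glue_dist_iB_inl T X u s hT hX]
  rw [ecross]
  ring

/-- Swapping which of two fragments `X`, `Y` (with equally many pendant vertices) is glued
at `u` and which at `v` does not change the terminal Wiener index. `T₁` glues `X` at `u`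
(via `s`) and `Y` at `v` (via `r`); `T₂` glues `Y` at `u` and `X` at `v`. -/
theorem stmt13 {α β γ : Type*} [Fintype α] [Fintype β] [Fintype γ]
    (T : SimpleGraph α) (X : SimpleGraph β) (Y : SimpleGraph γ)
    (u v : α) (s : β) (r : γ)
    (hT : T.IsTree) (hX : X.IsTree) (hY : Y.IsTree)
    (ha : 3 ≤ Fintype.card α) (hb : 3 ≤ Fintype.card β) (hc : 3 ≤ Fintype.card γ)
    (huv : u ≠ v)
    (hu : T.degree u ≠ 1) (hv : T.degree v ≠ 1)
    (hs : X.degree s ≠ 1) (hr : Y.degree r ≠ 1)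
    (hp : (pendants X).card = (pendants Y).card) :
    TW (glue (glue T X u s) Y (Sum.inl v) r) =
      TW (glue (glue T Y u r) X (Sum.inl v) s) := by
  have h2a : 2 ≤ Fintype.card α := by omega
  have h2b : 2 ≤ Fintype.card β := by omega
  have h2c : 2 ≤ Fintype.card γ := by omega
  have H1 := Sd_double_glue T X Y u v s r hT.isConnected hX.isConnected hY.isConnected
    h2a h2b h2c huv hu hv hs hr
  have H2 := Sd_double_glue T Y X u v r s hT.isConnected hY.isConnected hX.isConnected
    h2a h2c h2b huv hu hv hr hs
  rw [double_sum_add (pendants T) (pendants X) (fun a => T.dist a u) (fun x => X.dist s x),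
    double_sum_add (pendants T) (pendants Y) (fun a => T.dist a v) (fun y => Y.dist r y),
    double_sum_add3 (pendants X) (pendants Y) (T.dist v u) (fun x => X.dist s x)
      (fun y => Y.dist r y)] at H1
  rw [double_sum_add (pendants T) (pendants Y) (fun a => T.dist a u) (fun y => Y.dist r y),
    double_sum_add (pendants T) (pendants X) (fun a => T.dist a v) (fun x => X.dist s x),
    double_sum_add3 (pendants Y) (pendants X) (T.dist v u) (fun y => Y.dist r y)
      (fun x => X.dist s x)] at H2
  unfold TW
  rw [H1, H2]
  congr 1
  rw [hp]
  ring
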